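/- For n ≥ 2 and any doubly pure element a of the Cayley–Dickson algebra A_n: (1) a·ẽ₀ = ã and ẽ₀·a = −ã; (2) a·ã = −‖a‖²·ẽ₀ and ã·a = ‖a‖²·ẽ₀, and consequently ⟨a, ã⟩ = 0. -/

import Mathlib

noncomputable section

/-- The Cayley–Dickson algebra `A n` of dimension `2^n` over `ℝ`:
`A 0 = ℝ` and `A (n+1) = A n × A n`. -/
def CD : ℕ → Type
  | 0 => ℝ
  | n + 1 => CD n × CD n

namespace CD

instance instAddCommGroup : (n : ℕ) → AddCommGroup (CD n)
  | 0 => inferInstanceAs (AddCommGroup ℝ)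
  | n + 1 =>
    letI := instAddCommGroup n
    inferInstanceAs (AddCommGroup (CD n × CD n))

instance instModule : (n : ℕ) → Module ℝ (CD n)
  | 0 => inferInstanceAs (Module ℝ ℝ)
  | n + 1 =>
    letI := instAddCommGroup n
    letI := instModule n
    inferInstanceAs (Module ℝ (CD n × CD n))

/-- Conjugation: `x̄ = x` on `ℝ` and `(x₁,x₂)‾ = (x̄₁, -x₂)`. -/
protected def conj : {n : ℕ} → CD n → CD n
  | 0, x => x
  | _ + 1, x => (CD.conj x.1, -x.2)

/-- Cayley–Dickson multiplication: `(a,b)(x,y) = (ax - ȳb, ya + bx̄)`. -/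
protected def mul : {n : ℕ} → CD n → CD n → CD n
  | 0, x, y => (show ℝ from x) * (show ℝ from y)
  | _ + 1, x, y =>
    (CD.mul x.1 y.1 - CD.mul (CD.conj y.2) x.2,
     CD.mul y.2 x.1 + CD.mul x.2 (CD.conj y.1))

instance instMul (n : ℕ) : Mul (CD n) := ⟨CD.mul⟩

/-- The multiplicative unit `e₀` of `A n`. -/
def e0 : (n : ℕ) → CD n
  | 0 => (1 : ℝ)
  | n + 1 => (e0 n, 0)

/-- The element `ẽ₀ = (0, e₀)` of `A n` (junk value `0` for `n = 0`). -/
def te0 : (n : ℕ) → CD n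
  | 0 => 0
  | n + 1 => (0, e0 n)

/-- The "complexification" `α̃ = (-b, a)` of `α = (a,b)` (junk value `0` for `n = 0`);
note `α̃ = α·ẽ₀`. -/
def tilde : {n : ℕ} → CD n → CD n
  | 0, _ => 0
  | _ + 1, x => (-x.2, x.1)

/-- The standard inner product on `A n ≅ ℝ^{2^n}`. -/
protected def inner : {n : ℕ} → CD n → CD n → ℝ
  | 0, x, y => (show ℝ from x) * (show ℝ from y)
  | _ + 1, x, y => CD.inner x.1 y.1 + CD.inner x.2 y.2

/-- The euclidean norm on `A n`. -/
protected def norm {n : ℕ} (x : CD n) : ℝ := Real.sqrt (CD.inner x x)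

/-- `x` is pure if its trace `t(x) = x + x̄` vanishes. -/
def IsPure {n : ℕ} (x : CD n) : Prop := x + CD.conj x = 0

/-- `x = (a,b)` is doubly pure if both `a` and `b` are pure
(equivalently, both `x` and `x̃` are pure). -/
def IsDoublyPure : {n : ℕ} → CD n → Prop
  | 0, x => x = 0
  | _ + 1, x => IsPure x.1 ∧ IsPure x.2

/-- The associator `(x,y,z) = (xy)z - x(yz)`. -/
def assoc {n : ℕ} (x y z : CD n) : CD n := (x * y) * z - x * (y * z)

/-- The subspace `ℍ_a`: the real span of `{e₀, ã, a, ẽ₀}`. -/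
def Ha {n : ℕ} (a : CD n) : Submodule ℝ (CD n) :=
  Submodule.span ℝ {e0 n, tilde a, a, te0 n}

/-- The orthogonal complement `ℍ_a^⊥` of `ℍ_a` in `A n`. -/
def HaPerp {n : ℕ} (a : CD n) : Set (CD n) :=
  {x | ∀ y ∈ Ha a, CD.inner x y = 0}

/-- The element `ε = (ẽ₀, 0)` of `A (n+1)`. -/
def eps (n : ℕ) : CD (n + 1) := (te0 n, 0)

/-- `α̂ = (b,a)` for `α = (a,b) ∈ A (n+1)`. -/
def hat {n : ℕ} (x : CD (n + 1)) : CD (n + 1) := (x.2, x.1)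

/-- The element `(a, b)` of `A (n+1) = A n × A n`. -/
def pair {n : ℕ} (a b : CD n) : CD (n + 1) := (a, b)

end CD

/-! Write `a = (a₁, a₂)`. Double purity means `āᵢ = -aᵢ`, hence `aᵢ² = -aᵢāᵢ = -‖aᵢ‖² e₀`. With
this, each of the four products is one application of the doubling formula: in `a·ã` and `ã·a`
the first components cancel and the second ones add up to `∓(‖a₁‖² + ‖a₂‖²) e₀ = ∓‖a‖² e₀`. -/

namespace CD

variable {n : ℕ}

lemma ext {x y : CD (n + 1)} (h₁ : x.1 = y.1) (h₂ : x.2 = y.2) : x = y := Prod.ext h₁ h₂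

@[simp] lemma fst_zero : (0 : CD (n + 1)).1 = 0 := rfl
@[simp] lemma snd_zero : (0 : CD (n + 1)).2 = 0 := rfl
@[simp] lemma fst_add (x y : CD (n + 1)) : (x + y).1 = x.1 + y.1 := rfl
@[simp] lemma snd_add (x y : CD (n + 1)) : (x + y).2 = x.2 + y.2 := rfl
@[simp] lemma fst_neg (x : CD (n + 1)) : (-x).1 = -x.1 := rfl
@[simp] lemma snd_neg (x : CD (n + 1)) : (-x).2 = -x.2 := rfl
@[simp] lemma fst_smul (r : ℝ) (x : CD (n + 1)) : (r • x).1 = r • x.1 := rfl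
@[simp] lemma snd_smul (r : ℝ) (x : CD (n + 1)) : (r • x).2 = r • x.2 := rfl
@[simp] lemma fst_mul (x y : CD (n + 1)) : (x * y).1 = x.1 * y.1 - CD.conj y.2 * x.2 := rfl
@[simp] lemma snd_mul (x y : CD (n + 1)) : (x * y).2 = y.2 * x.1 + x.2 * CD.conj y.1 := rfl
@[simp] lemma fst_conj (x : CD (n + 1)) : (CD.conj x).1 = CD.conj x.1 := rfl
@[simp] lemma snd_conj (x : CD (n + 1)) : (CD.conj x).2 = -x.2 := rfl
@[simp] lemma fst_e0 : (e0 (n + 1)).1 = e0 n := rfl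
@[simp] lemma snd_e0 : (e0 (n + 1)).2 = 0 := rfl
@[simp] lemma fst_te0 : (te0 (n + 1)).1 = 0 := rfl
@[simp] lemma snd_te0 : (te0 (n + 1)).2 = e0 n := rfl
@[simp] lemma fst_tilde (x : CD (n + 1)) : (tilde x).1 = -x.2 := rfl
@[simp] lemma snd_tilde (x : CD (n + 1)) : (tilde x).2 = x.1 := rfl

lemma inner_succ (x y : CD (n + 1)) : CD.inner x y = CD.inner x.1 y.1 + CD.inner x.2 y.2 := rfl


@[simp] lemma conj_zero : CD.conj (0 : CD n) = 0 := by
  induction n with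
  | zero => rfl
  | succ n ih => exact ext (by simp [ih]) (by simp)

@[simp] lemma conj_e0 : CD.conj (e0 n) = e0 n := by
  induction n with
  | zero => rfl
  | succ n ih => exact ext (by simp [ih]) (by simp)

@[simp] lemma conj_add (x y : CD n) : CD.conj (x + y) = CD.conj x + CD.conj y := by
  induction n with
  | zero => rfl
  | succ n ih => exact ext (by simp [ih]) (by simp [add_comm])

@[simp] lemma conj_neg (x : CD n) : CD.conj (-x) = -CD.conj x := by
  induction n with
  | zero => rfl
  | succ n ih => exact ext (by simp [ih]) (by simp)

@[simp] lemma conj_conj (x : CD n) : CD.conj (CD.conj x) = x := by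
  induction n with
  | zero => rfl
  | succ n ih => exact ext (by simp [ih]) (by simp)

lemma mul_add_and_add_mul (x y z : CD n) :
    x * (y + z) = x * y + x * z ∧ (x + y) * z = x * z + y * z := by
  induction n with
  | zero => exact ⟨left_distrib (R := ℝ) x y z, right_distrib (R := ℝ) x y z⟩
  | succ n ih =>
    refine ⟨ext ?_ ?_, ext ?_ ?_⟩ <;>
      simp only [fst_mul, snd_mul, fst_add, snd_add, conj_add, (ih _ _ _).1, (ih _ _ _).2] <;>
      abel

lemma mul_add (x y z : CD n) : x * (y + z) = x * y + x * z := (mul_add_and_add_mul x y z).1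

lemma add_mul (x y z : CD n) : (x + y) * z = x * z + y * z := (mul_add_and_add_mul x y z).2

@[simp] lemma zero_mul (x : CD n) : 0 * x = 0 := by
  simpa using add_mul 0 0 x

@[simp] lemma mul_zero (x : CD n) : x * 0 = 0 := by
  simpa using mul_add x 0 0

@[simp] lemma neg_mul (x y : CD n) : -x * y = -(x * y) :=
  eq_neg_of_add_eq_zero_left (by rw [← add_mul, neg_add_cancel, zero_mul])

@[simp] lemma mul_neg (x y : CD n) : x * -y = -(x * y) :=
  eq_neg_of_add_eq_zero_left (by rw [← mul_add, neg_add_cancel, mul_zero])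

@[simp] lemma mul_e0 (x : CD n) : x * e0 n = x := by
  induction n with
  | zero => exact mul_one (M := ℝ) x
  | succ n ih => exact ext (by simp [ih]) (by simp [ih])

@[simp] lemma e0_mul (x : CD n) : e0 n * x = x := by
  induction n with
  | zero => exact one_mul (M := ℝ) x
  | succ n ih => exact ext (by simp [ih]) (by simp)

lemma inner_comm (x y : CD n) : CD.inner x y = CD.inner y x := by
  induction n with
  | zero => exact mul_comm (G := ℝ) x y
  | succ n ih => simp only [inner_succ, ih]

lemma inner_neg_right (x y : CD n) : CD.inner x (-y) = -CD.inner x y := by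
  induction n with
  | zero => exact _root_.mul_neg (α := ℝ) x y
  | succ n ih => simp only [inner_succ, snd_neg, fst_neg, ih, neg_add]

lemma inner_self_nonneg (x : CD n) : 0 ≤ CD.inner x x := by
  induction n with
  | zero => exact mul_self_nonneg (R := ℝ) x
  | succ n ih => exact add_nonneg (ih x.1) (ih x.2)

lemma norm_sq (x : CD n) : CD.norm x ^ 2 = CD.inner x x := Real.sq_sqrt (inner_self_nonneg x)

lemma conj_mul_self (x : CD n) : CD.conj x * x = CD.inner x x • e0 n := by
  induction n with
  | zero => exact (mul_one (M := ℝ) _).symm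
  | succ n ih => exact ext (by simp [ih, inner_succ, add_smul]) (by simp)

lemma mul_conj_self (x : CD n) : x * CD.conj x = CD.inner x x • e0 n := by
  induction n with
  | zero => exact (mul_one (M := ℝ) _).symm
  | succ n ih => exact ext (by simp [ih, conj_mul_self, inner_succ, add_smul]) (by simp)

lemma IsPure.conj_eq {x : CD n} (hx : IsPure x) : CD.conj x = -x :=
  eq_neg_of_add_eq_zero_right hx

lemma IsPure.mul_self {x : CD n} (hx : IsPure x) : x * x = -(CD.inner x x • e0 n) := by
  rw [← mul_conj_self, hx.conj_eq, mul_neg, neg_neg]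

lemma mul_te0 (a : CD (n + 1)) : a * te0 (n + 1) = tilde a :=
  ext (by simp) (by simp)

lemma inner_tilde_self (a : CD (n + 1)) : CD.inner a (tilde a) = 0 := by
  simp [inner_succ, inner_neg_right, inner_comm a.2]

namespace IsDoublyPure

variable {a : CD (n + 1)}

lemma te0_mul (ha : IsDoublyPure a) : te0 (n + 1) * a = -tilde a :=
  ext (by simp [ha.2.conj_eq]) (by simp [ha.1.conj_eq])

lemma mul_tilde_self (ha : IsDoublyPure a) : a * tilde a = -(CD.norm a ^ 2 • te0 (n + 1)) := by
  rw [norm_sq]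
  exact ext (by simp [ha.1.conj_eq])
    (by simp [ha.1.mul_self, ha.2.conj_eq, ha.2.mul_self, inner_succ, add_smul, add_comm])

lemma tilde_mul_self (ha : IsDoublyPure a) : tilde a * a = CD.norm a ^ 2 • te0 (n + 1) := by
  rw [norm_sq]
  exact ext (by simp [ha.2.conj_eq])
    (by simp [mul_conj_self, ha.2.mul_self, inner_succ, add_smul, add_comm])

end IsDoublyPure

end CD

/-- For `n ≥ 2` and any doubly pure `a ∈ A n`:
(1) `a·ẽ₀ = ã` and `ẽ₀·a = -ã`;
(2) `a·ã = -‖a‖²·ẽ₀` and `ã·a = ‖a‖²·ẽ₀`, and consequently `⟨a, ã⟩ = 0`. -/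
theorem statement0 (n : ℕ) (hn : 2 ≤ n) (a : CD n) (ha : CD.IsDoublyPure a) :
    a * CD.te0 n = CD.tilde a ∧
    CD.te0 n * a = -CD.tilde a ∧
    a * CD.tilde a = -(CD.norm a ^ 2 • CD.te0 n) ∧
    CD.tilde a * a = CD.norm a ^ 2 • CD.te0 n ∧
    CD.inner a (CD.tilde a) = 0 := by
  obtain ⟨m, rfl⟩ : ∃ m, n = m + 1 := ⟨n - 1, by omega⟩
  exact ⟨CD.mul_te0 a, ha.te0_mul, ha.mul_tilde_self, ha.tilde_mul_self, CD.inner_tilde_self a⟩
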